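/- For every integer k ≥ 3, if H is the cycle C_k on k vertices, then μ_int(K_1 ⊙ H) ≤ 2, where K_1 ⊙ H is the graph obtained from H by adding a single new universal vertex adjacent to every vertex of H (i.e., K_1 ⊙ C_k is the wheel graph on k+1 vertices). -/

import Mathlib

/-- An (improper) interval edge coloring: for every vertex, the set of colors on
incident edges forms an interval of consecutive integers. -/
def IsIntervalColoring {V : Type*} (G : SimpleGraph V) (c : Sym2 V → ℤ) : Prop :=
  ∀ v : V, ∀ a b x : ℤ,
    (∃ u, G.Adj v u ∧ c s(v, u) = a) → (∃ u, G.Adj v u ∧ c s(v, u) = b) →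
    a ≤ x → x ≤ b → ∃ u, G.Adj v u ∧ c s(v, u) = x

/-- A coloring is `k`-improper if at every vertex each color appears on at most
`k` incident edges. -/
def IsKImproper {V : Type*} (G : SimpleGraph V) (c : Sym2 V → ℤ) (k : ℕ) : Prop :=
  ∀ v : V, ∀ q : ℤ, ({u : V | G.Adj v u ∧ c s(v, u) = q}).ncard ≤ k

/-- The interval coloring impropriety `μ_int(G)`: the least `k` such that `G`
admits a `k`-improper interval edge coloring. -/
noncomputable def impropriety {V : Type*} (G : SimpleGraph V) : ℕ :=
  sInf {k : ℕ | ∃ c : Sym2 V → ℤ, IsIntervalColoring G c ∧ IsKImproper G c k}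

/-- The maximum degree of a graph. -/
noncomputable def maxDeg {V : Type*} (G : SimpleGraph V) : ℕ :=
  sSup {d : ℕ | ∃ v : V, (G.neighborSet v).ncard = d}

/-- The corona product `G ⊙ H`: take `G` and one copy of `H` for every vertex
of `G`, joining each vertex `v` of `G` to all vertices of its copy of `H`. -/
def corona {V W : Type*} (G : SimpleGraph V) (H : SimpleGraph W) :
    SimpleGraph (V ⊕ V × W) where
  Adj x y :=
    match x, y with
    | Sum.inl u, Sum.inl v => G.Adj u v
    | Sum.inl u, Sum.inr p => u = p.1
    | Sum.inr p, Sum.inl u => u = p.1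
    | Sum.inr p, Sum.inr q => p.1 = q.1 ∧ H.Adj p.2 q.2
  symm := by
    constructor
    rintro (u | p) (v | q) h
    · exact h.symm
    · exact h
    · exact h
    · exact ⟨h.1.symm, h.2.symm⟩
  loopless := by
    constructor
    rintro (u | p) h
    · exact G.ne_of_adj h rfl
    · exact H.ne_of_adj h.2 rfl

/-!
Colour the spoke from the hub to a rim vertex `w` with `f w` and a rim edge `wu` with
`⌊(f w + f u - 1) / 2⌋`, where `f` is a height function on the rim that changes by at most one
along edges. The hub then sees exactly the values of `f`, each as often as `f` takes it, while a
rim vertex `w` sees only `f w - 1` and `f w`, the latter on its spoke and on the edges to the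
neighbours one level higher. On `C_k` take `f i = min (i + 1) (k - i)`: it takes each of the
values `1, …, ⌈k/2⌉` at most twice and no vertex has two higher neighbours, so every colour
appears at most twice at every vertex.
-/

open SimpleGraph Set

section IntervalColoring

variable {V : Type*} (G : SimpleGraph V) (c : Sym2 V → ℤ)

def incidentColors (v : V) : Set ℤ := (fun u => c s(v, u)) '' G.neighborSet v

theorem isIntervalColoring_iff_ordConnected :
    IsIntervalColoring G c ↔ ∀ v, (incidentColors G c v).OrdConnected := by
  simp only [IsIntervalColoring, ordConnected_def, incidentColors, subset_def, mem_Icc,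
    mem_image, mem_neighborSet]
  exact forall_congr' fun v => ⟨fun h a ha b hb x hx => h a b x ha hb hx.1 hx.2,
    fun h a b x ha hb hax hxb => h ha hb x ⟨hax, hxb⟩⟩

theorem impropriety_le {k : ℕ} (hint : IsIntervalColoring G c) (himp : IsKImproper G c k) :
    impropriety G ≤ k :=
  Nat.sInf_le ⟨c, hint, himp⟩

end IntervalColoring

theorem Int.ordConnected_of_subset_pair {s : Set ℤ} {a : ℤ} (h : s ⊆ {a - 1, a}) :
    s.OrdConnected := by
  refine ⟨fun x hx y hy z hz => ?_⟩
  have hx' := h hx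
  have hy' := h hy
  simp only [mem_insert_iff, mem_singleton_iff, mem_Icc] at hx' hy' hz
  obtain rfl | rfl : z = x ∨ z = y := by omega
  exacts [hx, hy]

section Corona

variable {V W : Type*}

@[simp] theorem corona_adj_inl_inl {G : SimpleGraph V} {H : SimpleGraph W} {u v : V} :
    (corona G H).Adj (.inl u) (.inl v) ↔ G.Adj u v := Iff.rfl

@[simp] theorem corona_adj_inl_inr {G : SimpleGraph V} {H : SimpleGraph W} {u : V} {p : V × W} :
    (corona G H).Adj (.inl u) (.inr p) ↔ u = p.1 := Iff.rfl

@[simp] theorem corona_adj_inr_inl {G : SimpleGraph V} {H : SimpleGraph W} {u : V} {p : V × W} :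
    (corona G H).Adj (.inr p) (.inl u) ↔ u = p.1 := Iff.rfl

@[simp] theorem corona_adj_inr_inr {G : SimpleGraph V} {H : SimpleGraph W} {p q : V × W} :
    (corona G H).Adj (.inr p) (.inr q) ↔ p.1 = q.1 ∧ H.Adj p.2 q.2 := Iff.rfl

def coronaColor (f : W → ℤ) : V ⊕ V × W → V ⊕ V × W → ℤ
  | .inl _, .inl _ => 0
  | .inl _, .inr p => f p.2
  | .inr p, .inl _ => f p.2
  | .inr p, .inr q => (f p.2 + f q.2 - 1) / 2

theorem coronaColor_comm (f : W → ℤ) (x y : V ⊕ V × W) :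
    coronaColor f x y = coronaColor f y x := by
  rcases x with _ | _ <;> rcases y with _ | _ <;> simp only [coronaColor, add_comm]

def coronaColoring (f : W → ℤ) : Sym2 (V ⊕ V × W) → ℤ :=
  Sym2.lift ⟨coronaColor f, coronaColor_comm f⟩

@[simp] theorem coronaColoring_inl_inr (f : W → ℤ) (v : V) (p : V × W) :
    coronaColoring f s(.inl v, .inr p) = f p.2 := rfl

@[simp] theorem coronaColoring_inr_inl (f : W → ℤ) (v : V) (p : V × W) :
    coronaColoring f s(.inr p, .inl v) = f p.2 := rfl

@[simp] theorem coronaColoring_inr_inr (f : W → ℤ) (p q : V × W) :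
    coronaColoring f s(.inr p, .inr q) = (f p.2 + f q.2 - 1) / 2 := rfl

variable {H : SimpleGraph W} {f : W → ℤ}

theorem incidentColors_corona_inl (v : V) :
    incidentColors (corona ⊥ H) (coronaColoring f) (.inl v) = range f := by
  ext q
  constructor
  · rintro ⟨_ | ⟨v', w⟩, hadj, rfl⟩
    · simp at hadj
    · exact ⟨w, rfl⟩
  · rintro ⟨w, rfl⟩
    exact ⟨.inr (v, w), rfl, rfl⟩

theorem incidentColors_corona_inr_subset (hf : ∀ u w, H.Adj u w → f w ≤ f u + 1)
    (v : V) (w : W) :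
    incidentColors (corona ⊥ H) (coronaColoring f) (.inr (v, w)) ⊆ {f w - 1, f w} := by
  rintro _ ⟨_ | ⟨v', u⟩, hadj, rfl⟩
  · simp
  · have := hf w u hadj.2
    have := hf u w hadj.2.symm
    simp only [coronaColoring_inr_inr, mem_insert_iff, mem_singleton_iff]
    omega

theorem isIntervalColoring_coronaColoring (hf : ∀ u w, H.Adj u w → f w ≤ f u + 1)
    (hrange : (range f).OrdConnected) :
    IsIntervalColoring (corona (⊥ : SimpleGraph V) H) (coronaColoring f) := by
  refine (isIntervalColoring_iff_ordConnected _ _).2 ?_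
  rintro (v | ⟨v, w⟩)
  · rwa [incidentColors_corona_inl]
  · exact Int.ordConnected_of_subset_pair (incidentColors_corona_inr_subset hf v w)

theorem isKImproper_coronaColoring [Finite W] {k : ℕ}
    (hf : ∀ u w, H.Adj u w → f w ≤ f u + 1)
    (hfiber : ∀ q, (f ⁻¹' {q}).ncard ≤ k) (hdeg : ∀ w, (H.neighborSet w).ncard ≤ k)
    (hup : ∀ w, {u | H.Adj w u ∧ f u = f w + 1}.ncard + 1 ≤ k) :
    IsKImproper (corona (⊥ : SimpleGraph V) H) (coronaColoring f) k := by
  rintro (v | ⟨v, w⟩) q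
  all_goals have hinj : (Sum.inr ∘ Prod.mk v : W → V ⊕ V × W).Injective :=
    Sum.inr_injective.comp (Prod.mk_right_injective v)
  · have hspokes : {y | (corona ⊥ H).Adj (.inl v) y ∧ coronaColoring f s(.inl v, y) = q} =
        (Sum.inr ∘ Prod.mk v) '' (f ⁻¹' {q}) := by
      ext (_ | ⟨v', u⟩) <;> simp [eq_comm, and_comm]
    rw [hspokes, ncard_image_of_injective _ hinj]
    exact hfiber q
  by_cases hq : q = f w
  · subst hq
    calc _ ≤ (insert (.inl v)
            ((Sum.inr ∘ Prod.mk v) '' {u | H.Adj w u ∧ f u = f w + 1})).ncard := by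
          refine ncard_le_ncard ?_
          rintro (_ | ⟨v', u⟩) ⟨hadj, hcol⟩
          · simp_all
          · have := hf u w hadj.2.symm
            have := hf w u hadj.2
            simp only [corona_adj_inr_inr, coronaColoring_inr_inr] at hadj hcol
            simp only [mem_insert_iff, mem_image, Function.comp_apply]
            exact Or.inr ⟨u, ⟨hadj.2, by omega⟩, by rw [hadj.1]⟩
      _ ≤ {u | H.Adj w u ∧ f u = f w + 1}.ncard + 1 := by
          rw [← ncard_image_of_injective _ hinj]
          exact ncard_insert_le _ _
      _ ≤ k := hup w
  · calc _ ≤ ((Sum.inr ∘ Prod.mk v) '' H.neighborSet w).ncard := by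
          refine ncard_le_ncard ?_
          rintro (_ | ⟨v', u⟩) ⟨hadj, hcol⟩
          · exact absurd hcol.symm hq
          · simp_all
      _ = (H.neighborSet w).ncard := ncard_image_of_injective _ hinj
      _ ≤ k := hdeg w

theorem impropriety_corona_bot_le [Finite W] {k : ℕ}
    (hf : ∀ u w, H.Adj u w → f w ≤ f u + 1) (hrange : (range f).OrdConnected)
    (hfiber : ∀ q, (f ⁻¹' {q}).ncard ≤ k) (hdeg : ∀ w, (H.neighborSet w).ncard ≤ k)
    (hup : ∀ w, {u | H.Adj w u ∧ f u = f w + 1}.ncard + 1 ≤ k) :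
    impropriety (corona (⊥ : SimpleGraph V) H) ≤ k :=
  impropriety_le _ _ (isIntervalColoring_coronaColoring hf hrange)
    (isKImproper_coronaColoring hf hfiber hdeg hup)

end Corona

theorem Fin.val_eq_of_val_sub_eq_one {n : ℕ} {u v : Fin n} (h : (u - v).val = 1) :
    u.val = v.val + 1 ∨ u.val = 0 ∧ v.val + 1 = n := by
  rcases le_or_gt v u with huv | huv
  · rw [Fin.sub_val_of_le huv] at h
    omega
  · rw [Fin.coe_sub_iff_lt.mpr huv] at h
    omega

theorem cycleGraph_adj_val {n : ℕ} {u v : Fin n} (h : (cycleGraph n).Adj u v) :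
    u.val = v.val + 1 ∨ v.val = u.val + 1 ∨
      u.val = 0 ∧ v.val + 1 = n ∨ v.val = 0 ∧ u.val + 1 = n := by
  rcases cycleGraph_adj'.mp h with h | h
  · have := Fin.val_eq_of_val_sub_eq_one h
    omega
  · have := Fin.val_eq_of_val_sub_eq_one h
    omega

/-- One more than the distance in `cycleGraph n` from `i` to the edge `{n - 1, 0}`. -/
def cycleHeight (n : ℕ) (i : Fin n) : ℤ := min (i.val + 1) (n - i.val)

section CycleHeight

variable {n : ℕ}

theorem cycleHeight_le_of_adj {u v : Fin n} (h : (cycleGraph n).Adj u v) :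
    cycleHeight n v ≤ cycleHeight n u + 1 := by
  have := cycleGraph_adj_val h
  simp only [cycleHeight]
  omega

theorem ordConnected_range_cycleHeight : (range (cycleHeight n)).OrdConnected := by
  refine ⟨?_⟩
  rintro _ ⟨i, rfl⟩ _ ⟨j, rfl⟩ z ⟨hiz, hzj⟩
  simp only [cycleHeight] at hiz hzj
  refine ⟨⟨(z - 1).toNat, by omega⟩, ?_⟩
  simp only [cycleHeight]
  omega

theorem ncard_preimage_cycleHeight_le_two (q : ℤ) : (cycleHeight n ⁻¹' {q}).ncard ≤ 2 := by
  by_contra! h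
  obtain ⟨a, b, c, ha, hb, hc, hab, hac, hbc⟩ := (two_lt_ncard_iff).mp h
  simp only [mem_preimage, mem_singleton_iff, cycleHeight] at ha hb hc
  rw [Ne, Fin.ext_iff] at hab hac hbc
  omega

theorem ncard_neighborSet_cycleGraph_le_two (w : Fin n) :
    ((cycleGraph n).neighborSet w).ncard ≤ 2 := by
  by_contra! h
  obtain ⟨a, b, c, ha, hb, hc, hab, hac, hbc⟩ := (two_lt_ncard_iff).mp h
  have := cycleGraph_adj_val ha
  have := cycleGraph_adj_val hb
  have := cycleGraph_adj_val hc
  rw [Ne, Fin.ext_iff] at hab hac hbc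
  omega

theorem ncard_higher_neighbors_cycleHeight_le_one (w : Fin n) :
    {u | (cycleGraph n).Adj w u ∧ cycleHeight n u = cycleHeight n w + 1}.ncard ≤ 1 := by
  refine (ncard_le_one_iff).mpr fun {a b} ⟨hwa, ha⟩ ⟨hwb, hb⟩ => Fin.ext ?_
  have := cycleGraph_adj_val hwa
  have := cycleGraph_adj_val hwb
  simp only [cycleHeight] at ha hb
  omega

end CycleHeight

theorem stmt9_general (k : ℕ) :
    impropriety (corona (⊥ : SimpleGraph (Fin 1)) (SimpleGraph.cycleGraph k)) ≤ 2 :=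
  impropriety_corona_bot_le (fun _ _ => cycleHeight_le_of_adj) ordConnected_range_cycleHeight
    ncard_preimage_cycleHeight_le_two ncard_neighborSet_cycleGraph_le_two
    fun w => Nat.add_le_add_right (ncard_higher_neighbors_cycleHeight_le_one w) 1

/-- For every `k ≥ 3`, the corona product `K_1 ⊙ C_k` (the wheel on `k+1`
vertices) satisfies `μ_int(K_1 ⊙ C_k) ≤ 2`. -/
theorem stmt9 (k : ℕ) (hk : 3 ≤ k) :
    impropriety (corona (⊥ : SimpleGraph (Fin 1)) (SimpleGraph.cycleGraph k)) ≤ 2 :=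
  stmt9_general k
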